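/- Let N ≥ 1, let α ≥ 0 and β ≥ 0 be real numbers, and consider the N×N real matrices I (identity), D₋ with entries (D₋)_{ij} = δ_{i,j} − δ_{i,j+1}, and D₊ with entries (D₊)_{ij} = δ_{i+1,j} − δ_{i,j}. Then every complex eigenvalue λ of the 2N×2N block matrix M = [[(1+β)I − α D₊, −β I], [−β I, (1+β)I + α D₋]] satisfies Re(λ) ≥ 1; in particular, M is invertible. -/
import Mathlib

open Finset Matrix

private lemma sum_ite_le_of_subsingleton {N : ℕ} (c : ℝ) (hc : 0 ≤ c) (P : Fin N → Prop)
    [DecidablePred P] (h : ∀ a b, P a → P b → a = b) :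
    ∑ j, (if P j then c else 0) ≤ c := by
  rw [Finset.sum_ite, Finset.sum_const, Finset.sum_const_zero, add_zero]
  have hcard : (Finset.univ.filter P).card ≤ 1 :=
    Finset.card_le_one.mpr fun a ha b hb =>
      h a b (Finset.mem_filter.mp ha).2 (Finset.mem_filter.mp hb).2
  calc ((Finset.univ.filter P).card : ℕ) • c
      = ((Finset.univ.filter P).card : ℝ) * c := nsmul_eq_mul _ _
    _ ≤ 1 * c := by
        apply mul_le_mul_of_nonneg_right _ hc
        exact_mod_cast hcard
    _ = c := one_mul c

/-- Geršgorin localization for the implicit block matrix of the scheme: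
every complex eigenvalue `λ` of `M = [[(1+β)I - αD₊, -βI],[-βI,(1+β)I + αD₋]]` (with
`α, β ≥ 0` and `D∓` the one-sided difference matrices) satisfies `Re λ ≥ 1`; in
particular `M` is invertible. -/
theorem stmt_14 (N : ℕ) (hN : 1 ≤ N) (α β : ℝ) (hα : 0 ≤ α) (hβ : 0 ≤ β)
    (Dm Dp : Matrix (Fin N) (Fin N) ℝ)
    (hDm : ∀ i j, Dm i j = (if i = j then (1 : ℝ) else 0)
        - (if (i : ℕ) = (j : ℕ) + 1 then (1 : ℝ) else 0))
    (hDp : ∀ i j, Dp i j = (if (i : ℕ) + 1 = (j : ℕ) then (1 : ℝ) else 0)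
        - (if i = j then (1 : ℝ) else 0))
    (M : Matrix (Fin N ⊕ Fin N) (Fin N ⊕ Fin N) ℝ)
    (hM : M = Matrix.fromBlocks
        ((1 + β) • (1 : Matrix (Fin N) (Fin N) ℝ) - α • Dp)
        (-(β • (1 : Matrix (Fin N) (Fin N) ℝ)))
        (-(β • (1 : Matrix (Fin N) (Fin N) ℝ)))
        ((1 + β) • (1 : Matrix (Fin N) (Fin N) ℝ) + α • Dm)) :
    (∀ lam : ℂ,
        Module.End.HasEigenvalue (Matrix.toLin' (M.map (algebraMap ℝ ℂ))) lam → 1 ≤ lam.re) ∧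
      IsUnit M := by
  -- diagonal entries
  have hdiag : ∀ k, M k k = 1 + α + β := by
    rintro (i | i) <;>
      simp [hM, Matrix.fromBlocks_apply₁₁, Matrix.fromBlocks_apply₂₂, Matrix.one_apply,
        hDp i i, hDm i i, Fin.val_inj] <;> ring
  -- row sums off diagonal
  have hrow : ∀ k, ∑ j ∈ Finset.univ.erase k, |M k j| ≤ α + β := by
    have habs : ∀ k, |M k k| = 1 + α + β := by
      intro k; rw [hdiag k, abs_of_nonneg (by linarith)]
    have hfull : ∀ k, ∑ j, |M k j| ≤ 1 + 2 * α + 2 * β := by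
      rintro (i | i) <;> rw [Fintype.sum_sum_type]
      · have h1 : ∑ j : Fin N, |M (Sum.inl i) (Sum.inl j)| ≤ 1 + α + β + α := by
          have hb : ∀ j : Fin N, |M (Sum.inl i) (Sum.inl j)| ≤
              (if i = j then 1 + α + β else 0) + (if (i : ℕ) + 1 = (j : ℕ) then α else 0) := by
            intro j
            rcases eq_or_ne i j with h | h
            · subst h
              simp [hM, Matrix.one_apply, hDp i i]
              rw [abs_of_nonneg (by linarith)]; linarith
            · have h' : (i : ℕ) ≠ (j : ℕ) := fun hc => h (Fin.ext hc)
              rcases eq_or_ne ((i : ℕ) + 1) ((j : ℕ)) with h2 | h2 <;>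
                simp [hM, Matrix.one_apply, hDp i j, h, h2, abs_of_nonneg hα]
          calc ∑ j : Fin N, |M (Sum.inl i) (Sum.inl j)|
              ≤ ∑ j : Fin N, ((if i = j then 1 + α + β else 0)
                  + (if (i : ℕ) + 1 = (j : ℕ) then α else 0)) := Finset.sum_le_sum fun j _ => hb j
            _ ≤ (1 + α + β) + α := by
                rw [Finset.sum_add_distrib, Finset.sum_ite_eq Finset.univ i
                  (fun _ => (1 : ℝ) + α + β)]
                simp only [Finset.mem_univ, if_true]
                gcongr
                exact sum_ite_le_of_subsingleton α hα _
                  (fun a b ha hb => Fin.ext (by omega))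
        have h2 : ∑ j : Fin N, |M (Sum.inl i) (Sum.inr j)| = β := by
          have : ∀ j : Fin N, |M (Sum.inl i) (Sum.inr j)| = if i = j then β else 0 := by
            intro j
            rcases eq_or_ne i j with h | h <;>
              simp [hM, Matrix.one_apply, h, abs_of_nonneg hβ]
          rw [Finset.sum_congr rfl fun j _ => this j]
          simp
        linarith
      · have h1 : ∑ j : Fin N, |M (Sum.inr i) (Sum.inl j)| = β := by
          have : ∀ j : Fin N, |M (Sum.inr i) (Sum.inl j)| = if i = j then β else 0 := by
            intro j
            rcases eq_or_ne i j with h | h <;>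
              simp [hM, Matrix.one_apply, h, abs_of_nonneg hβ]
          rw [Finset.sum_congr rfl fun j _ => this j]
          simp
        have h2 : ∑ j : Fin N, |M (Sum.inr i) (Sum.inr j)| ≤ 1 + α + β + α := by
          have hb : ∀ j : Fin N, |M (Sum.inr i) (Sum.inr j)| ≤
              (if i = j then 1 + α + β else 0) + (if (i : ℕ) = (j : ℕ) + 1 then α else 0) := by
            intro j
            rcases eq_or_ne i j with h | h
            · subst h
              simp [hM, Matrix.one_apply, hDm i i]
              rw [abs_of_nonneg (by linarith)]; linarith
            · have h' : (i : ℕ) ≠ (j : ℕ) := fun hc => h (Fin.ext hc)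
              rcases eq_or_ne ((i : ℕ)) ((j : ℕ) + 1) with h2 | h2 <;>
                simp [hM, Matrix.one_apply, hDm i j, h, h2, abs_of_nonneg hα]
          calc ∑ j : Fin N, |M (Sum.inr i) (Sum.inr j)|
              ≤ ∑ j : Fin N, ((if i = j then 1 + α + β else 0)
                  + (if (i : ℕ) = (j : ℕ) + 1 then α else 0)) := Finset.sum_le_sum fun j _ => hb j
            _ ≤ (1 + α + β) + α := by
                rw [Finset.sum_add_distrib, Finset.sum_ite_eq Finset.univ i
                  (fun _ => (1 : ℝ) + α + β)]
                simp only [Finset.mem_univ, if_true]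
                gcongr
                exact sum_ite_le_of_subsingleton α hα _
                  (fun a b ha hb => Fin.ext (by omega))
        linarith
    intro k
    rw [Finset.sum_erase_eq_sub (Finset.mem_univ k), habs k]
    have := hfull k
    linarith
  -- part 1: eigenvalue bound
  have part1 : ∀ lam : ℂ,
      Module.End.HasEigenvalue (Matrix.toLin' (M.map (algebraMap ℝ ℂ))) lam → 1 ≤ lam.re := by
    intro lam hlam
    obtain ⟨k, hk⟩ := eigenvalue_mem_ball hlam
    rw [Metric.mem_closedBall] at hk
    have hAd : (M.map (algebraMap ℝ ℂ)) k k = ((1 + α + β : ℝ) : ℂ) := by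
      simp [Matrix.map_apply, hdiag k]
    have hr : ∑ j ∈ Finset.univ.erase k, ‖(M.map (algebraMap ℝ ℂ)) k j‖ ≤ α + β := by
      refine le_trans (le_of_eq (Finset.sum_congr rfl fun j _ => ?_)) (hrow k)
      simp [Matrix.map_apply, Complex.norm_real]
    have hd : dist lam (((1 + α + β : ℝ) : ℂ)) ≤ α + β := by
      rw [← hAd]; exact hk.trans hr
    rw [Complex.dist_eq] at hd
    have hre : |lam.re - (1 + α + β)| ≤ α + β := by
      have := Complex.abs_re_le_norm (lam - ((1 + α + β : ℝ) : ℂ))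
      simp only [Complex.sub_re, Complex.ofReal_re] at this
      exact this.trans hd
    have := abs_le.mp hre
    linarith [this.1]
  refine ⟨part1, ?_⟩
  -- part 2: invertibility
  rw [Matrix.isUnit_iff_isUnit_det, isUnit_iff_ne_zero]
  intro hdet
  have hdetC : (M.map (algebraMap ℝ ℂ)).det = 0 := by
    have := (RingHom.map_det (algebraMap ℝ ℂ) M).symm
    rw [hdet, map_zero] at this
    exact this.symm ▸ rfl
  obtain ⟨v, hv0, hv⟩ := (Matrix.exists_mulVec_eq_zero_iff).mpr hdetC
  have hev : Module.End.HasEigenvalue (Matrix.toLin' (M.map (algebraMap ℝ ℂ))) 0 := by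
    refine Module.End.hasEigenvalue_of_hasEigenvector
      (⟨Module.End.mem_eigenspace_iff.mpr ?_, hv0⟩ :
        Module.End.HasEigenvector (Matrix.toLin' (M.map (algebraMap ℝ ℂ))) 0 v)
    simp only [Matrix.toLin'_apply, zero_smul]
    exact hv
  have := part1 0 hev
  norm_num at this
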